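/- arXiv:2202.13784 — 2 statements merged into one kernel-verified Lean document; each statement's English description precedes it below -/
import Mathlib

section
/- Let R = K[x_1,...,x_n] be a polynomial ring over a field K and let f_1,...,f_c ∈ R with c ≤ n. Define ideals recursively by J_0 = ⟨0⟩, K_i = J_{i-1} : (J_{i-1} : f_i^∞), and J_i = ((J_{i-1} : f_i^∞) + ⟨f_i⟩) : (∏_{j=1}^{i} K_j)^∞ for 1 ≤ i ≤ c. Then for every i with 0 ≤ i ≤ c, the radical of ⟨f_1,...,f_i⟩ equals the radical of J_i ∩ ⋂_{j=1}^{i} (K_j + ⟨f_{j+1},...,f_i⟩). -/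
/-!
Induction on `i`. Write `S = J_{i-1} : f_i^∞`. Since `K_i = J_{i-1} : S` and `J_{i-1} ⊆ S`, we
have `√J_{i-1} = √(S ∩ K_i)`; and because `R` is Noetherian the saturation is reached at a finite
power `f_i^N`, so `f_i ∈ √K_i`. Adding `f_i` to the invariant for `i - 1` and distributing the sum
over the intersections (valid up to radical) gives
`√⟨f_1,…,f_i⟩ = √((S + ⟨f_i⟩) ∩ K_i ∩ ⋂_{j<i} (K_j + ⟨f_{j+1},…,f_i⟩))`.
Finally `√A = √((A : P^∞) ∩ (A + P))` for all ideals `A`, `P`; with `A = S + ⟨f_i⟩` and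
`P = ∏_{j ≤ i} K_j` the factor `A + P` is redundant, because the remaining intersection lies in
`√(P + ⟨f_1,…,f_i⟩) ⊆ √(A + P)`.
-/

/-- The saturation `I : J^∞` of an ideal `I` by an ideal `J`: the union (supremum) of the
increasing chain of ideal quotients `I : J^k` for `k → ∞`. -/
noncomputable def Ideal.sat {R : Type*} [CommRing R] (I J : Ideal R) : Ideal R :=
  ⨆ k : ℕ, Submodule.colon I ((J ^ k : Ideal R) : Set R)

namespace Ideal

variable {R : Type*} [CommRing R]

theorem monotone_colon_pow (I J : Ideal R) :
    Monotone fun k : ℕ => I.colon ((J ^ k : Ideal R) : Set R) :=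
  fun _ _ hkl => Submodule.colon_mono le_rfl (pow_le_pow_right hkl)

theorem mem_sat {I J : Ideal R} {x : R} :
    x ∈ I.sat J ↔ ∃ k : ℕ, x ∈ I.colon ((J ^ k : Ideal R) : Set R) :=
  Submodule.mem_iSup_of_chain ⟨_, monotone_colon_pow I J⟩ x

theorem le_sat (I J : Ideal R) : I ≤ I.sat J :=
  fun _ hx => mem_sat.2 ⟨0, le_colon hx⟩

theorem exists_sat_eq_colon_pow [IsNoetherianRing R] (I J : Ideal R) :
    ∃ N : ℕ, I.sat J = I.colon ((J ^ N : Ideal R) : Set R) := by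
  obtain ⟨N, hN⟩ := monotone_stabilizes_iff_noetherian.mpr inferInstance
    ⟨_, monotone_colon_pow I J⟩
  refine ⟨N, le_antisymm (iSup_le fun k => ?_)
    (le_iSup (fun k : ℕ => I.colon ((J ^ k : Ideal R) : Set R)) N)⟩
  rcases le_total k N with hk | hk
  · exact monotone_colon_pow I J hk
  · exact (hN k hk).ge

theorem radical_sat_inf_sup (I J : Ideal R) : (I.sat J ⊓ (I ⊔ J)).radical = I.radical := by
  refine le_antisymm ?_ (radical_mono (le_inf (le_sat I J) le_sup_left))
  rw [radical_le_radical_iff]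
  rintro x ⟨hxs, hxIJ⟩
  obtain ⟨k, hk⟩ := mem_sat.1 hxs
  have hpow : x ^ (1 + k) ∈ I ⊔ J ^ k := by
    simpa using sup_pow_add_le_pow_sup_pow (pow_mem_pow hxIJ (1 + k))
  obtain ⟨a, ha, b, hb, hab⟩ := Submodule.mem_sup.1 hpow
  refine ⟨1 + k + 1, ?_⟩
  rw [pow_succ, ← hab, add_mul]
  exact add_mem (I.mul_mem_right x ha) (by simpa [mul_comm] using Submodule.mem_colon.1 hk b hb)

theorem radical_inf_colon {I J : Ideal R} (h : I ≤ J) :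
    (J ⊓ I.colon (J : Set R)).radical = I.radical := by
  refine le_antisymm ?_ (radical_mono (le_inf h le_colon))
  rw [radical_le_radical_iff]
  rintro x ⟨hxJ, hx⟩
  exact ⟨2, by simpa [sq] using Submodule.mem_colon.1 hx x hxJ⟩

theorem mem_radical_colon_sat_span_singleton [IsNoetherianRing R] (I : Ideal R) (g : R) :
    g ∈ (I.colon (I.sat (span {g}) : Set R)).radical := by
  obtain ⟨N, hN⟩ := exists_sat_eq_colon_pow I (span {g})
  refine ⟨N, Submodule.mem_colon.2 fun p hp => ?_⟩
  rw [hN, span_singleton_pow, SetLike.mem_coe, mem_colon_span_singleton] at hp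
  simpa [mul_comm] using hp

section Radical

theorem radical_sup_eq_left {I J : Ideal R} (h : J ≤ I.radical) : (I ⊔ J).radical = I.radical :=
  le_antisymm (radical_le_radical_iff.2 (sup_le le_radical h)) (radical_mono le_sup_left)

theorem radical_inf_sup (A B C : Ideal R) :
    (A ⊓ B ⊔ C).radical = ((A ⊔ C) ⊓ (B ⊔ C)).radical := by
  refine le_antisymm (radical_mono (le_inf (sup_le_sup_right inf_le_left C)
    (sup_le_sup_right inf_le_right C))) ?_
  have hmul : (A ⊔ C) * (B ⊔ C) ≤ A ⊓ B ⊔ C := by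
    rw [sup_mul, mul_sup, mul_sup]
    exact sup_le (sup_le (le_sup_of_le_left mul_le_inf) (le_sup_of_le_right mul_le_right))
      (sup_le (le_sup_of_le_right mul_le_left) (le_sup_of_le_right mul_le_right))
  rw [radical_inf, ← radical_mul]
  exact radical_mono hmul

variable {ι : Type*} [DecidableEq ι]

theorem radical_biInf_sup (s : Finset ι) (A : ι → Ideal R) (C : Ideal R) :
    ((⨅ j ∈ s, A j) ⊔ C).radical = (⨅ j ∈ s, (A j ⊔ C)).radical := by
  induction s using Finset.induction with
  | empty => simp
  | insert a s _ ih =>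
    rw [Finset.iInf_insert, Finset.iInf_insert, radical_inf_sup, radical_inf, ih, ← radical_inf]

theorem radical_finset_prod (s : Finset ι) (A : ι → Ideal R) :
    (∏ j ∈ s, A j).radical = ⨅ j ∈ s, (A j).radical := by
  induction s using Finset.induction with
  | empty => simp
  | insert a s ha ih => rw [Finset.prod_insert ha, Finset.iInf_insert, radical_mul, ih]

theorem biInf_sup_le_radical_prod_sup (s : Finset ι) (A : ι → Ideal R) (C : Ideal R) :
    ⨅ j ∈ s, (A j ⊔ C) ≤ ((∏ j ∈ s, A j) ⊔ C).radical := by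
  refine le_radical.trans ?_
  rw [← radical_biInf_sup, radical_le_radical_iff]
  refine sup_le ?_ (le_sup_right.trans le_radical)
  calc ⨅ j ∈ s, A j ≤ ⨅ j ∈ s, (A j).radical := iInf₂_mono fun _ _ => le_radical
    _ = (∏ j ∈ s, A j).radical := (radical_finset_prod s A).symm
    _ ≤ _ := radical_mono le_sup_left

end Radical

section LoopStep

variable [IsNoetherianRing R]

theorem radical_sup_span_singleton_eq_sat_inf_colon (J : Ideal R) (g : R) :
    (J ⊔ span {g}).radical =
      ((J.sat (span {g}) ⊔ span {g}) ⊓ J.colon (J.sat (span {g}) : Set R)).radical := by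
  rw [radical_sup, ← radical_inf_colon (le_sat J (span {g})), ← radical_sup, radical_inf_sup,
    radical_inf, radical_inf, radical_sup_eq_left
      ((span_singleton_le_iff_mem _).2 (mem_radical_colon_sat_span_singleton J g))]

theorem radical_sup_span_singleton_eq_sat_inf {F J Q Q' P : Ideal R} {g : R}
    (hF : F.radical = (J ⊓ Q).radical) (hQ : (Q ⊔ span {g}).radical = Q'.radical)
    (hP : J.colon (J.sat (span {g}) : Set R) ⊓ Q' ≤ (P ⊔ (F ⊔ span {g})).radical) :
    (F ⊔ span {g}).radical =
      ((J.sat (span {g}) ⊔ span {g}).sat P ⊓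
        (J.colon (J.sat (span {g}) : Set R) ⊓ Q')).radical := by
  set S := J.sat (span {g})
  set K' := J.colon (S : Set R)
  have hFS : F ⊔ span {g} ≤ (S ⊔ span {g}).radical := by
    refine sup_le ?_ (le_sup_right.trans le_radical)
    calc F ≤ (J ⊓ Q).radical := hF ▸ le_radical
      _ ≤ (S ⊔ span {g}).radical :=
        radical_mono (inf_le_left.trans ((le_sat J _).trans le_sup_left))
  have hK'Q' : (K' ⊓ Q').radical ≤ (S ⊔ span {g} ⊔ P).radical := by
    rw [radical_le_radical_iff]
    refine hP.trans (radical_le_radical_iff.2 (sup_le (le_sup_right.trans le_radical) ?_))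
    exact hFS.trans (radical_mono le_sup_left)
  calc (F ⊔ span {g}).radical = (J ⊓ Q ⊔ span {g}).radical := by
        rw [radical_sup, hF, ← radical_sup]
    _ = (S ⊔ span {g}).radical ⊓ (K' ⊓ Q').radical := by
        rw [radical_inf_sup, radical_inf, radical_sup_span_singleton_eq_sat_inf_colon, hQ,
          radical_inf, radical_inf, inf_assoc]
    _ = ((S ⊔ span {g}).sat P).radical ⊓ (S ⊔ span {g} ⊔ P).radical ⊓ (K' ⊓ Q').radical := by
        rw [← radical_inf ((S ⊔ span {g}).sat P), radical_sat_inf_sup]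
    _ = ((S ⊔ span {g}).sat P ⊓ (K' ⊓ Q')).radical := by
        rw [inf_assoc, inf_eq_right.2 hK'Q', ← radical_inf]

end LoopStep

section Intervals

variable (f : ℕ → R) (K : ℕ → Ideal R)

theorem span_image_Icc_add_one {a i : ℕ} (h : a ≤ i + 1) :
    span (f '' Set.Icc a (i + 1)) = span (f '' Set.Icc a i) ⊔ span {f (i + 1)} := by
  rw [← Set.insert_Icc_right_eq_Icc_add_one h, Set.image_insert_eq, span_insert, sup_comm]

theorem biInf_Icc_add_one (i : ℕ) :
    ⨅ j ∈ Finset.Icc 1 (i + 1), (K j ⊔ span (f '' Set.Icc (j + 1) (i + 1))) =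
      K (i + 1) ⊓ ⨅ j ∈ Finset.Icc 1 i, (K j ⊔ span (f '' Set.Icc (j + 1) (i + 1))) := by
  rw [← Finset.insert_Icc_right_eq_Icc_add_one (by omega), Finset.iInf_insert,
    Set.Icc_eq_empty (by omega), Set.image_empty, span_empty, sup_bot_eq]

theorem radical_biInf_Icc_sup_span_singleton (i : ℕ) :
    ((⨅ j ∈ Finset.Icc 1 i, (K j ⊔ span (f '' Set.Icc (j + 1) i))) ⊔ span {f (i + 1)}).radical =
      (⨅ j ∈ Finset.Icc 1 i, (K j ⊔ span (f '' Set.Icc (j + 1) (i + 1)))).radical := by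
  rw [radical_biInf_sup]
  congr 1
  refine iInf_congr fun j => iInf_congr fun hj => ?_
  rw [span_image_Icc_add_one f (by have := (Finset.mem_Icc.1 hj).2; omega), sup_assoc]

theorem biInf_Icc_le_radical_prod_sup_span (i : ℕ) :
    ⨅ j ∈ Finset.Icc 1 i, (K j ⊔ span (f '' Set.Icc (j + 1) i)) ≤
      ((∏ j ∈ Finset.Icc 1 i, K j) ⊔ span (f '' Set.Icc 1 i)).radical :=
  (iInf₂_mono fun j _ => sup_le_sup_left (span_mono (Set.image_mono
    (Set.Icc_subset_Icc_left (by omega)))) (K j)).trans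
    (biInf_sup_le_radical_prod_sup _ _ _)

end Intervals

end Ideal

theorem loop_invariant_radical_general {Fld : Type*} [Field Fld] {n c : ℕ}
    (f : ℕ → MvPolynomial (Fin n) Fld)
    (J K : ℕ → Ideal (MvPolynomial (Fin n) Fld))
    (hJ0 : J 0 = ⊥)
    (hK : ∀ i, 1 ≤ i → i ≤ c →
      K i = Submodule.colon (J (i - 1)) (Ideal.sat (J (i - 1)) (Ideal.span {f i})))
    (hJ : ∀ i, 1 ≤ i → i ≤ c →
      J i = Ideal.sat (Ideal.sat (J (i - 1)) (Ideal.span {f i}) ⊔ Ideal.span {f i})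
        (∏ j ∈ Finset.Icc 1 i, K j)) :
    ∀ i ≤ c,
      (Ideal.span (f '' Set.Icc 1 i)).radical =
        (J i ⊓ ⨅ j ∈ Finset.Icc 1 i,
          (K j ⊔ Ideal.span (f '' Set.Icc (j + 1) i))).radical := by
  intro i hi
  induction i with
  | zero => simp [hJ0]
  | succ i ih =>
    have hKi : K (i + 1) = (J i).colon ((J i).sat (Ideal.span {f (i + 1)})) := by
      simpa using hK (i + 1) (by omega) hi
    have hJi : J (i + 1) = ((J i).sat (Ideal.span {f (i + 1)}) ⊔ Ideal.span {f (i + 1)}).sat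
        (∏ j ∈ Finset.Icc 1 (i + 1), K j) := by
      simpa using hJ (i + 1) (by omega) hi
    have hP := Ideal.biInf_Icc_le_radical_prod_sup_span f K (i + 1)
    rw [Ideal.biInf_Icc_add_one, hKi, Ideal.span_image_Icc_add_one f (by omega)] at hP
    rw [Ideal.span_image_Icc_add_one f (by omega), hJi, Ideal.biInf_Icc_add_one, hKi]
    exact Ideal.radical_sup_span_singleton_eq_sat_inf (ih (by omega))
      (Ideal.radical_biInf_Icc_sup_span_singleton f K i) hP

/-- Let `R = K[x_1,...,x_n]`, `f_1,...,f_c ∈ R` with `c ≤ n`.  Define recursively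
`J_0 = ⟨0⟩`, `K_i = J_{i-1} : (J_{i-1} : f_i^∞)` and
`J_i = ((J_{i-1} : f_i^∞) + ⟨f_i⟩) : (∏_{j=1}^{i} K_j)^∞`.  Then for every `0 ≤ i ≤ c`,
`√⟨f_1,...,f_i⟩ = √(J_i ∩ ⋂_{j=1}^{i} (K_j + ⟨f_{j+1},...,f_i⟩))`. -/
theorem loop_invariant_radical {Fld : Type*} [Field Fld] {n c : ℕ} (hc : c ≤ n)
    (f : ℕ → MvPolynomial (Fin n) Fld)
    (J K : ℕ → Ideal (MvPolynomial (Fin n) Fld))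
    (hJ0 : J 0 = ⊥)
    (hK : ∀ i, 1 ≤ i → i ≤ c →
      K i = Submodule.colon (J (i - 1)) (Ideal.sat (J (i - 1)) (Ideal.span {f i})))
    (hJ : ∀ i, 1 ≤ i → i ≤ c →
      J i = Ideal.sat (Ideal.sat (J (i - 1)) (Ideal.span {f i}) ⊔ Ideal.span {f i})
        (∏ j ∈ Finset.Icc 1 i, K j)) :
    ∀ i ≤ c,
      (Ideal.span (f '' Set.Icc 1 i)).radical =
        (J i ⊓ ⨅ j ∈ Finset.Icc 1 i,
          (K j ⊔ Ideal.span (f '' Set.Icc (j + 1) i))).radical :=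
  loop_invariant_radical_general f J K hJ0 hK hJ
end

section
/- Let R = K[x_1,...,x_n] be a polynomial ring over a field K, let I ⊆ R be an ideal and let J = ⟨g_1,...,g_t⟩ ⊆ R. Then there exists a nonzero polynomial h ∈ K[a_1,...,a_t] (defining a Zariski-open subset D = {a ∈ K^t : h(a) ≠ 0} of K^t) such that for every (a_1,...,a_t) ∈ K^t with h(a_1,...,a_t) ≠ 0, the saturation I : J^∞ equals the saturation I : (∑_{j=1}^t a_j g_j)^∞. -/
/-!
Let `S = I : J^∞`. In a Noetherian ring `S` is `J`-saturated, so no associated prime of `R ⧸ S`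
contains `J`. For each of these finitely many primes `P` some `g_j ∉ P`, so `∑ a_j g_j ∉ P`
off the zero set of a nonzero linear form in `a`. Off the zero set of the product `h` of these
forms, `f = ∑ a_j g_j` lies in no associated prime, i.e. it is a nonzerodivisor on `R ⧸ S`;
hence `I : f^∞ ⊆ S : f^∞ = S`, and the reverse inclusion holds because `f ∈ J`.
-/

namespace Ideal

variable {R : Type*} [CommRing R]

theorem colon_pow_monotone (I J : Ideal R) :
    Monotone fun k : ℕ ↦ Submodule.colon I ((J ^ k : Ideal R) : Set R) :=
  fun _ _ hkl ↦ Submodule.colon_mono le_rfl (Ideal.pow_le_pow_right hkl)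

theorem mem_sat_iff {I J : Ideal R} {x : R} : x ∈ I.sat J ↔ ∃ k, ∀ p ∈ J ^ k, x * p ∈ I := by
  simp only [Ideal.sat, Submodule.mem_iSup_of_directed _ (colon_pow_monotone I J).directed_le,
    Submodule.mem_colon, smul_eq_mul, SetLike.mem_coe]

theorem sat_le_sat_of_le (I : Ideal R) {J J' : Ideal R} (h : J' ≤ J) : I.sat J ≤ I.sat J' := by
  intro x hx
  obtain ⟨k, hk⟩ := mem_sat_iff.mp hx
  exact mem_sat_iff.mpr ⟨k, fun p hp ↦ hk p (Ideal.pow_right_mono h k hp)⟩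

theorem exists_sat_mul_pow_le [IsNoetherianRing R] (I J : Ideal R) :
    ∃ N, I.sat J * J ^ N ≤ I := by
  obtain ⟨N, hN⟩ := WellFoundedGT.monotone_chain_condition ⟨_, colon_pow_monotone I J⟩
  refine ⟨N, Ideal.mul_le.mpr fun y hy p hp ↦ ?_⟩
  obtain ⟨k, hk⟩ := mem_sat_iff.mp hy
  have hstable : Submodule.colon I ((J ^ N : Ideal R) : Set R) =
      Submodule.colon I ((J ^ max k N : Ideal R) : Set R) := hN _ (le_max_right k N)
  have hyN : y ∈ Submodule.colon I ((J ^ N : Ideal R) : Set R) := by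
    rw [hstable]
    exact colon_pow_monotone I J (le_max_left k N) (Submodule.mem_colon.mpr hk)
  simpa using Submodule.mem_colon.mp hyN p hp

theorem mem_sat_of_forall_mul_mem [IsNoetherianRing R] {I J : Ideal R} {x : R}
    (hx : ∀ p ∈ J, x * p ∈ I.sat J) : x ∈ I.sat J := by
  obtain ⟨N, hN⟩ := exists_sat_mul_pow_le I J
  refine mem_sat_iff.mpr ⟨N + 1, fun p hp ↦ ?_⟩
  rw [pow_succ'] at hp
  refine Submodule.mul_induction_on hp (fun a ha b hb ↦ ?_) (fun p q hp hq ↦ ?_)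
  · simpa only [mul_assoc] using hN (mul_mem_mul (hx a ha) hb)
  · simpa only [mul_add] using add_mem hp hq

end Ideal

namespace MvPolynomial

variable {K V ι : Type*} [Field K] [AddCommGroup V] [Module K V] [Fintype ι]

theorem exists_ne_zero_forall_eval_ne_zero_sum_smul_notMem {W : Submodule K V} {g : ι → V}
    (hg : ∃ j, g j ∉ W) :
    ∃ ℓ : MvPolynomial ι K, ℓ ≠ 0 ∧ ∀ a : ι → K, eval a ℓ ≠ 0 → ∑ j, a j • g j ∉ W := by
  classical
  obtain ⟨j₀, hj₀⟩ := hg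
  obtain ⟨ψ, hψ, hψW⟩ := Submodule.exists_dual_map_eq_bot_of_notMem hj₀ inferInstance
  have heval (a : ι → K) : eval a (∑ j, C (ψ (g j)) * X j) = ψ (∑ j, a j • g j) := by
    simp [mul_comm]
  refine ⟨∑ j, C (ψ (g j)) * X j, fun hzero ↦ hψ ?_, fun a ha hmem ↦ ha ?_⟩
  · simpa [Pi.single_apply] using (heval (Pi.single j₀ 1)).symm.trans (by rw [hzero, map_zero])
  · rw [heval, ← Submodule.mem_bot K, ← hψW]
    exact Submodule.mem_map_of_mem hmem

theorem exists_ne_zero_forall_eval_ne_zero_sum_smul_notMem_of_finite {s : Set (Submodule K V)}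
    (hs : s.Finite) {g : ι → V} (hg : ∀ W ∈ s, ∃ j, g j ∉ W) :
    ∃ h : MvPolynomial ι K, h ≠ 0 ∧
      ∀ a : ι → K, eval a h ≠ 0 → ∀ W ∈ s, ∑ j, a j • g j ∉ W := by
  induction s, hs using Set.Finite.induction_on with
  | empty => exact ⟨1, one_ne_zero, by simp⟩
  | @insert W s _ _ ih =>
    obtain ⟨ℓ, hℓ, hℓW⟩ := exists_ne_zero_forall_eval_ne_zero_sum_smul_notMem (hg W (by simp))
    obtain ⟨h, hh, hhs⟩ := ih fun W' hW' ↦ hg W' (Set.mem_insert_of_mem W hW')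
    refine ⟨ℓ * h, mul_ne_zero hℓ hh, fun a ha ↦ ?_⟩
    rw [map_mul, mul_ne_zero_iff] at ha
    exact Set.forall_mem_insert.mpr ⟨hℓW a ha.1, hhs a ha.2⟩

end MvPolynomial

namespace Ideal

variable {R : Type*} [CommRing R] [IsNoetherianRing R]

theorem not_le_of_mem_associatedPrimes_quotient_sat {I J P : Ideal R}
    (hP : P ∈ associatedPrimes R (R ⧸ I.sat J)) : ¬J ≤ P := by
  obtain ⟨hPprime, x', rfl⟩ := isAssociatedPrime_iff.mp hP
  obtain ⟨x, rfl⟩ := Ideal.Quotient.mk_surjective x'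
  intro hJ
  have hx : x ∈ I.sat J := mem_sat_of_forall_mul_mem fun p hp ↦ by
    have := Submodule.mem_colon_singleton.mp (hJ hp)
    rwa [Submodule.mem_bot, Algebra.smul_def, Ideal.Quotient.algebraMap_eq, ← map_mul,
      Ideal.Quotient.eq_zero_iff_mem, mul_comm] at this
  rw [Ideal.Quotient.eq_zero_iff_mem.mpr hx, Submodule.colon_singleton_zero] at hPprime
  exact hPprime.ne_top rfl

theorem mem_of_mul_pow_mem_of_forall_notMem_associatedPrimes {S : Ideal R} {f x : R}
    (hf : ∀ P ∈ associatedPrimes R (R ⧸ S), f ∉ P) (m : ℕ) (hx : x * f ^ m ∈ S) : x ∈ S := by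
  induction m generalizing x with
  | zero => simpa using hx
  | succ m ih =>
    refine ih ?_
    by_contra hxf
    have : f ∈ ⋃ P ∈ associatedPrimes R (R ⧸ S), (P : Set R) := by
      rw [biUnion_associatedPrimes_eq_zero_divisors]
      refine ⟨Ideal.Quotient.mk S (x * f ^ m), ?_, ?_⟩
      · rwa [Ne, Ideal.Quotient.eq_zero_iff_mem]
      · rwa [Algebra.smul_def, Ideal.Quotient.algebraMap_eq, ← map_mul,
          Ideal.Quotient.eq_zero_iff_mem, mul_comm, mul_assoc, ← pow_succ]
    obtain ⟨P, hP, hfP⟩ := Set.mem_iUnion₂.mp this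
    exact hf P hP hfP

theorem sat_eq_sat_span_singleton {I J : Ideal R} {f : R} (hfJ : f ∈ J)
    (hf : ∀ P ∈ associatedPrimes R (R ⧸ I.sat J), f ∉ P) : I.sat J = I.sat (span {f}) := by
  refine le_antisymm (sat_le_sat_of_le I ((span_singleton_le_iff_mem J).mpr hfJ)) fun x hx ↦ ?_
  obtain ⟨m, hm⟩ := mem_sat_iff.mp hx
  have hfm : f ^ m ∈ span {f} ^ m := by
    rw [span_singleton_pow]
    exact mem_span_singleton_self _
  exact mem_of_mul_pow_mem_of_forall_notMem_associatedPrimes hf m (le_sat I J (hm _ hfm))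

end Ideal

/-- Let `R = K[x_1,...,x_n]`, `I ⊆ R` an ideal and `J = ⟨g_1,...,g_t⟩ ⊆ R`.  There is a
nonzero polynomial `h ∈ K[a_1,...,a_t]` (cutting out a Zariski-open subset of `K^t`) such
that for every point `a ∈ K^t` with `h(a) ≠ 0`, we have
`I : J^∞ = I : (∑ j a_j g_j)^∞`. -/
theorem exists_generic_linear_combination_sat {K : Type*} [Field K] {n t : ℕ}
    (I : Ideal (MvPolynomial (Fin n) K)) (g : Fin t → MvPolynomial (Fin n) K)
    (J : Ideal (MvPolynomial (Fin n) K)) (hJ : J = Ideal.span (Set.range g)) :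
    ∃ h : MvPolynomial (Fin t) K, h ≠ 0 ∧
      ∀ a : Fin t → K, MvPolynomial.eval a h ≠ 0 →
        Ideal.sat I J = Ideal.sat I (Ideal.span {∑ j, a j • g j}) := by
  have hg : ∀ W ∈ (fun P : Ideal _ ↦ P.restrictScalars K) ''
      associatedPrimes _ (MvPolynomial (Fin n) K ⧸ I.sat J), ∃ j, g j ∉ W := by
    rintro _ ⟨P, hP, rfl⟩
    by_contra! hgP
    refine Ideal.not_le_of_mem_associatedPrimes_quotient_sat hP ?_
    rw [hJ, Ideal.span_le, Set.range_subset_iff]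
    exact hgP
  obtain ⟨h, hh, hgeneric⟩ :=
    MvPolynomial.exists_ne_zero_forall_eval_ne_zero_sum_smul_notMem_of_finite
      ((associatedPrimes.finite _ _).image _) hg
  have hcomb (a : Fin t → K) : ∑ j, a j • g j ∈ J := by
    rw [hJ]
    exact Ideal.sum_mem _ fun j _ ↦
      Submodule.smul_of_tower_mem _ (a j) (Ideal.subset_span (Set.mem_range_self j))
  exact ⟨h, hh, fun a ha ↦
    Ideal.sat_eq_sat_span_singleton (hcomb a) fun P hP ↦ hgeneric a ha _ ⟨P, hP, rfl⟩⟩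
end
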